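/- (Bounded advantage under forward KL) Let Ṽ₀ ∈ ℝ and suppose θ ∈ ℝ^{S×A} satisfies Ṽ_λ^{π_θ}(u) ≥ Ṽ₀. Set C_A := (r_max/(1−γ) − Ṽ₀)/(λ c_u). Then: (i) for every state s and action a, π_θ(a|s) ≥ exp( −(C_A + log|A|)/c_ref ); and (ii) the regularized advantage satisfies max_{s,a} |Ã_λ^{π_θ}(s,a)| ≤ (r_max + λ C_A)/(1−γ). -/

import Mathlib

open Finset

/-- The softmax policy `π_θ(a|s) = exp(θ_{sa})/∑_{a'} exp(θ_{sa'})`. -/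
noncomputable def softmaxPolicy {S A : Type*} [Fintype A]
    (θ : S × A → ℝ) (s : S) (a : A) : ℝ :=
  Real.exp (θ (s, a)) / ∑ a' : A, Real.exp (θ (s, a'))

/-- The `f`-divergence `D_f(p,q) := ∑_a q(a) f(p(a)/q(a))` of two probability vectors. -/
noncomputable def fDiv {A : Type*} [Fintype A] (f : ℝ → ℝ) (p q : A → ℝ) : ℝ :=
  ∑ a : A, q a * f (p a / q a)

/-- `π` is a policy: each `π(·|s)` is a strictly positive probability distribution on `A`. -/
def IsPolicy {S A : Type*} [Fintype A] (π : S → A → ℝ) : Prop :=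
  (∀ s a, 0 < π s a) ∧ ∀ s, ∑ a : A, π s a = 1

/-- `V` satisfies the Bellman equation of the `f`-divergence regularized value function
`Ṽ_λ^π`. -/
def IsRegValue {S A : Type*} [Fintype S] [Fintype A]
    (P : S → A → S → ℝ) (r : S → A → ℝ) (γ lam : ℝ) (f : ℝ → ℝ)
    (πref π : S → A → ℝ) (V : S → ℝ) : Prop :=
  ∀ s, V s = (∑ a : A, π s a * (r s a + γ * ∑ s' : S, P s a s' * V s')) -
      lam * fDiv f (π s) (πref s)

/-- The regularized Q-function `Q̃_λ^π`. -/
noncomputable def Qreg {S A : Type*} [Fintype S] [Fintype A]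
    (P : S → A → S → ℝ) (r : S → A → ℝ) (γ lam : ℝ) (f : ℝ → ℝ)
    (πref π : S → A → ℝ) (V : S → ℝ) (s : S) (a : A) : ℝ :=
  r s a - lam * fDiv f (π s) (πref s) + γ * ∑ s' : S, P s a s' * V s'

/-!
Write `g(s,a) = r(s,a) + γ ∑_{s'} P(s'|s,a) V(s')`, so that `V(s) = 𝔼_{π(·|s)} g(s,·) - λ D(s)`
with `D(s) = KL(π_ref(·|s) ‖ π(·|s)) ≥ 0`. A maximum principle gives `V ≤ r_max/(1-γ)`, hence
`V(s) + λ D(s) ≤ r_max/(1-γ)` at every state; averaging against `u ≥ c_u` and using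
`Ṽ(u) ≥ Ṽ₀` yields `D(s) ≤ C_A`. Since the cross entropy `∑_a π_ref(a|s) (-log π(a|s))` is
`D(s)` plus the entropy of `π_ref(·|s)`, which is at most `log |A|`, each `-log π(a|s)` is at most
`(C_A + log |A|)/c_ref`. Finally `D ≤ C_A` gives `V ≥ -λ C_A/(1-γ)` by the minimum principle, so
`g` ranges in an interval of length at most `(r_max + λ C_A)/(1-γ)`, and the advantage
`g(s,a) - 𝔼_{π(·|s)} g(s,·)` is bounded by that length.
-/

section WeightedSums

variable {ι : Type*} [Fintype ι] {w f : ι → ℝ} {c : ℝ}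

lemma sum_mul_le_of_forall_le (hw : ∀ i, 0 ≤ w i) (hw1 : ∑ i, w i = 1) (hf : ∀ i, f i ≤ c) :
    ∑ i, w i * f i ≤ c :=
  calc ∑ i, w i * f i ≤ ∑ i, w i * c := sum_le_sum fun i _ => mul_le_mul_of_nonneg_left (hf i) (hw i)
    _ = c := by rw [← sum_mul, hw1, one_mul]

lemma le_sum_mul_of_forall_le (hw : ∀ i, 0 ≤ w i) (hw1 : ∑ i, w i = 1) (hf : ∀ i, c ≤ f i) :
    c ≤ ∑ i, w i * f i :=
  calc c = ∑ i, w i * c := by rw [← sum_mul, hw1, one_mul]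
    _ ≤ ∑ i, w i * f i := sum_le_sum fun i _ => mul_le_mul_of_nonneg_left (hf i) (hw i)

lemma abs_sub_sum_mul_le {lo hi : ℝ} (hw : ∀ i, 0 ≤ w i) (hw1 : ∑ i, w i = 1)
    (hlo : ∀ i, lo ≤ f i) (hhi : ∀ i, f i ≤ hi) (j : ι) :
    |f j - ∑ i, w i * f i| ≤ hi - lo := by
  have := sum_mul_le_of_forall_le hw hw1 hhi
  have := le_sum_mul_of_forall_le hw hw1 hlo
  rw [abs_le]
  constructor <;> linarith [hlo j, hhi j]

lemma le_div_of_add_mul_le_of_le_sum_mul {u V D : ι → ℝ} {cu lam Vmax V0 : ℝ}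
    (hu1 : ∑ i, u i = 1) (hcu0 : 0 < cu) (hcu : ∀ i, cu ≤ u i) (hD : ∀ i, 0 ≤ D i)
    (hlam : 0 < lam) (hVD : ∀ i, V i + lam * D i ≤ Vmax) (hV0 : V0 ≤ ∑ i, u i * V i) (j : ι) :
    D j ≤ (Vmax - V0) / (lam * cu) := by
  have hu : ∀ i, 0 ≤ u i := fun i => hcu0.le.trans (hcu i)
  have hj : cu * D j ≤ ∑ i, u i * D i :=
    (mul_le_mul_of_nonneg_right (hcu j) (hD j)).trans
      (single_le_sum (f := fun i => u i * D i) (fun i _ => mul_nonneg (hu i) (hD i)) (mem_univ j))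
  have havg : ∑ i, u i * (V i + lam * D i) ≤ Vmax := sum_mul_le_of_forall_le hu hu1 hVD
  have hsplit : ∑ i, u i * (V i + lam * D i) = ∑ i, u i * V i + lam * ∑ i, u i * D i := by
    rw [mul_sum, ← sum_add_distrib]
    exact sum_congr rfl fun i _ => by ring
  rw [le_div_iff₀ (mul_pos hlam hcu0)]
  linarith [mul_le_mul_of_nonneg_left hj hlam.le]

end WeightedSums

section MaximumPrinciple

variable {S : Type*} [Finite S] {V : S → ℝ} {b γ : ℝ}

lemma le_div_one_sub_of_le_add_mul_bound (hγ : γ < 1)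
    (h : ∀ M, (∀ t, V t ≤ M) → ∀ s, V s ≤ b + γ * M) (s : S) : V s ≤ b / (1 - γ) := by
  have : Nonempty S := ⟨s⟩
  obtain ⟨s₀, hs₀⟩ := Finite.exists_max V
  have hfix : V s₀ ≤ b + γ * V s₀ := h (V s₀) hs₀ s₀
  exact (hs₀ s).trans (by rw [le_div_iff₀ (by linarith)]; linarith)

lemma div_one_sub_le_of_add_mul_bound_le (hγ : γ < 1)
    (h : ∀ m, (∀ t, m ≤ V t) → ∀ s, b + γ * m ≤ V s) (s : S) : b / (1 - γ) ≤ V s := by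
  have := le_div_one_sub_of_le_add_mul_bound (V := fun t => -V t) (b := -b) hγ
    (fun M hM s => by linarith [h (-M) (fun t => by linarith [hM t]) s]) s
  rw [neg_div] at this
  linarith

end MaximumPrinciple

section Softmax

variable {S A : Type*} [Fintype A]

lemma IsPolicy.le_one {π : S → A → ℝ} (hπ : IsPolicy π) (s : S) (a : A) : π s a ≤ 1 :=
  (hπ.2 s).symm ▸ single_le_sum (fun a' _ => (hπ.1 s a').le) (mem_univ a)

lemma IsPolicy.ciInf_pos [Finite S] [Nonempty S] [Nonempty A] {π : S → A → ℝ}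
    (hπ : IsPolicy π) : 0 < ⨅ q : S × A, π q.1 q.2 := by
  obtain ⟨q₀, hq₀⟩ := exists_eq_ciInf_of_finite (f := fun q : S × A => π q.1 q.2)
  exact hq₀ ▸ hπ.1 q₀.1 q₀.2

lemma isPolicy_softmaxPolicy [Nonempty A] (θ : S × A → ℝ) : IsPolicy (softmaxPolicy θ) := by
  have hZ : ∀ s, 0 < ∑ a', Real.exp (θ (s, a')) :=
    fun s => sum_pos (fun a' _ => Real.exp_pos _) univ_nonempty
  refine ⟨fun s a => div_pos (Real.exp_pos _) (hZ s), fun s => ?_⟩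
  simp only [softmaxPolicy, ← sum_div]
  exact div_self (hZ s).ne'

end Softmax

section KullbackLeibler

variable {A : Type*} [Fintype A] {p q : A → ℝ}

lemma sub_le_mul_log_div {x y : ℝ} (hx : 0 < x) (hy : 0 < y) : y - x ≤ y * Real.log (y / x) := by
  have h := Real.one_sub_inv_le_log_of_pos (div_pos hy hx)
  rw [inv_div] at h
  calc y - x = y * (1 - x / y) := by field_simp
    _ ≤ y * Real.log (y / x) := mul_le_mul_of_nonneg_left h hy.le

lemma sum_sub_sum_le_sum_mul_log_div (hp : ∀ a, 0 < p a) (hq : ∀ a, 0 < q a) :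
    ∑ a, q a - ∑ a, p a ≤ ∑ a, q a * Real.log (q a / p a) := by
  rw [← sum_sub_distrib]
  exact sum_le_sum fun a _ => sub_le_mul_log_div (hp a) (hq a)

lemma fDiv_neg_log_eq (p q : A → ℝ) :
    fDiv (fun x => -Real.log x) p q = ∑ a, q a * Real.log (q a / p a) := by
  refine sum_congr rfl fun a _ => ?_
  rw [← neg_neg (Real.log (q a / p a)), ← Real.log_inv, inv_div]

lemma fDiv_neg_log_nonneg (hp : ∀ a, 0 < p a) (hq : ∀ a, 0 < q a)
    (hpq : ∑ a, p a = ∑ a, q a) : 0 ≤ fDiv (fun x => -Real.log x) p q := by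
  rw [fDiv_neg_log_eq]
  linarith [sum_sub_sum_le_sum_mul_log_div hp hq]

/-- The entropy bound is Gibbs' inequality against the uniform distribution. -/
lemma sum_mul_neg_log_le_log_card (hq : ∀ a, 0 < q a) (hq1 : ∑ a, q a = 1) :
    ∑ a, q a * -Real.log (q a) ≤ Real.log (Fintype.card A) := by
  have : Nonempty A := by
    by_contra h
    simp [not_nonempty_iff.mp h] at hq1
  have hn : (0 : ℝ) < Fintype.card A := by exact_mod_cast Fintype.card_pos
  have hgibbs := sum_sub_sum_le_sum_mul_log_div (p := fun _ => (Fintype.card A : ℝ)⁻¹)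
    (fun _ => inv_pos.mpr hn) hq
  have hsplit : ∀ a, q a * Real.log (q a / (Fintype.card A : ℝ)⁻¹)
      = q a * Real.log (Fintype.card A) - q a * -Real.log (q a) := fun a => by
    rw [div_inv_eq_mul, Real.log_mul (hq a).ne' hn.ne']
    ring
  simp only [hsplit, sum_sub_distrib, ← sum_mul, hq1, sum_const, card_univ, nsmul_eq_mul] at hgibbs
  rw [mul_inv_cancel₀ hn.ne'] at hgibbs
  linarith

lemma sum_mul_neg_log_eq_fDiv_add (hp : ∀ a, 0 < p a) (hq : ∀ a, 0 < q a) :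
    ∑ a, q a * -Real.log (p a)
      = fDiv (fun x => -Real.log x) p q + ∑ a, q a * -Real.log (q a) := by
  rw [fDiv_neg_log_eq, ← sum_add_distrib]
  refine sum_congr rfl fun a _ => ?_
  rw [Real.log_div (hq a).ne' (hp a).ne']
  ring

lemma exp_le_of_fDiv_neg_log_le (hp : ∀ a, 0 < p a) (hp1 : ∀ a, p a ≤ 1)
    (hq : ∀ a, 0 < q a) (hq1 : ∑ a, q a = 1) {C c : ℝ}
    (hC : fDiv (fun x => -Real.log x) p q ≤ C) (hc : 0 < c) (hcq : ∀ a, c ≤ q a) (a : A) :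
    Real.exp (-(C + Real.log (Fintype.card A)) / c) ≤ p a := by
  set X := C + Real.log (Fintype.card A)
  have hnonneg : ∀ a', 0 ≤ q a' * -Real.log (p a') := fun a' =>
    mul_nonneg (hq a').le (neg_nonneg.mpr (Real.log_nonpos (hp a').le (hp1 a')))
  have hterm : q a * -Real.log (p a) ≤ X := by
    calc q a * -Real.log (p a) ≤ ∑ a', q a' * -Real.log (p a') :=
          single_le_sum (f := fun a' => q a' * -Real.log (p a')) (fun a' _ => hnonneg a')
            (mem_univ a)
      _ ≤ X := by
          rw [sum_mul_neg_log_eq_fDiv_add hp hq]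
          linarith [sum_mul_neg_log_le_log_card hq hq1]
  have hX : 0 ≤ X := (hnonneg a).trans hterm
  have hlog : -X / c ≤ Real.log (p a) := by
    have h1 : -Real.log (p a) ≤ X / q a := by
      rw [le_div_iff₀ (hq a)]
      linarith
    have h2 : X / q a ≤ X / c := div_le_div_of_nonneg_left hX hc (hcq a)
    rw [neg_div]
    linarith
  calc Real.exp (-X / c) ≤ Real.exp (Real.log (p a)) := Real.exp_le_exp.mpr hlog
    _ = p a := Real.exp_log (hp a)

end KullbackLeibler

section RegularizedValue

variable {S A : Type*} [Fintype S] {P : S → A → S → ℝ} {r : S → A → ℝ} {γ rmax : ℝ} {V : S → ℝ}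

noncomputable def bellmanBackup (P : S → A → S → ℝ) (r : S → A → ℝ) (γ : ℝ) (V : S → ℝ)
    (s : S) (a : A) : ℝ :=
  r s a + γ * ∑ s', P s a s' * V s'

lemma bellmanBackup_le (hP : ∀ s a, (∀ s', 0 ≤ P s a s') ∧ ∑ s', P s a s' = 1) (hγ0 : 0 ≤ γ)
    {M : ℝ} (hr : ∀ s a, r s a ≤ rmax) (hV : ∀ t, V t ≤ M) (s : S) (a : A) :
    bellmanBackup P r γ V s a ≤ rmax + γ * M :=
  add_le_add (hr s a)
    (mul_le_mul_of_nonneg_left (sum_mul_le_of_forall_le (hP s a).1 (hP s a).2 hV) hγ0)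

lemma le_bellmanBackup (hP : ∀ s a, (∀ s', 0 ≤ P s a s') ∧ ∑ s', P s a s' = 1) (hγ0 : 0 ≤ γ)
    {m : ℝ} (hr : ∀ s a, 0 ≤ r s a) (hV : ∀ t, m ≤ V t) (s : S) (a : A) :
    γ * m ≤ bellmanBackup P r γ V s a := by
  have := mul_le_mul_of_nonneg_left (le_sum_mul_of_forall_le (hP s a).1 (hP s a).2 hV) hγ0
  unfold bellmanBackup
  linarith [hr s a]

variable [Fintype A] {lam : ℝ} {f : ℝ → ℝ} {πref π : S → A → ℝ}

lemma IsRegValue.le_rmax_div (hV : IsRegValue P r γ lam f πref π V)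
    (hP : ∀ s a, (∀ s', 0 ≤ P s a s') ∧ ∑ s', P s a s' = 1) (hγ0 : 0 ≤ γ) (hγ1 : γ < 1)
    (hπ : IsPolicy π) (hr : ∀ s a, r s a ≤ rmax) (hD : ∀ s, 0 ≤ lam * fDiv f (π s) (πref s))
    (s : S) : V s ≤ rmax / (1 - γ) := by
  refine le_div_one_sub_of_le_add_mul_bound hγ1 (fun M hM t => ?_) s
  have := sum_mul_le_of_forall_le (fun a => (hπ.1 t a).le) (hπ.2 t)
    (bellmanBackup_le hP hγ0 hr hM t)
  rw [hV t]
  exact (sub_le_self _ (hD t)).trans this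

lemma IsRegValue.add_mul_fDiv_le (hV : IsRegValue P r γ lam f πref π V)
    (hP : ∀ s a, (∀ s', 0 ≤ P s a s') ∧ ∑ s', P s a s' = 1) (hγ0 : 0 ≤ γ) (hγ1 : γ < 1)
    (hπ : IsPolicy π) (hr : ∀ s a, r s a ≤ rmax) (hD : ∀ s, 0 ≤ lam * fDiv f (π s) (πref s))
    (s : S) : V s + lam * fDiv f (π s) (πref s) ≤ rmax / (1 - γ) := by
  have hfix : rmax + γ * (rmax / (1 - γ)) = rmax / (1 - γ) := by
    field_simp [(by linarith : (1 - γ) ≠ 0)]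
    ring
  have hQ : ∀ a, bellmanBackup P r γ V s a ≤ rmax / (1 - γ) := fun a =>
    hfix ▸ bellmanBackup_le hP hγ0 hr (hV.le_rmax_div hP hγ0 hγ1 hπ hr hD) s a
  have := sum_mul_le_of_forall_le (fun a => (hπ.1 s a).le) (hπ.2 s) hQ
  rw [hV s]
  unfold bellmanBackup at this
  linarith

lemma IsRegValue.neg_div_le (hV : IsRegValue P r γ lam f πref π V)
    (hP : ∀ s a, (∀ s', 0 ≤ P s a s') ∧ ∑ s', P s a s' = 1) (hγ0 : 0 ≤ γ) (hγ1 : γ < 1)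
    (hπ : IsPolicy π) (hr : ∀ s a, 0 ≤ r s a) {B : ℝ}
    (hD : ∀ s, lam * fDiv f (π s) (πref s) ≤ B) (s : S) : -B / (1 - γ) ≤ V s := by
  refine div_one_sub_le_of_add_mul_bound_le hγ1 (fun m hm t => ?_) s
  have := le_sum_mul_of_forall_le (fun a => (hπ.1 t a).le) (hπ.2 t)
    (le_bellmanBackup hP hγ0 hr hm t)
  rw [hV t]
  unfold bellmanBackup at this
  linarith [hD t]

lemma Qreg_sub_eq (hV : IsRegValue P r γ lam f πref π V) (s : S) (a : A) :
    Qreg P r γ lam f πref π V s a - V s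
      = bellmanBackup P r γ V s a - ∑ a', π s a' * bellmanBackup P r γ V s a' := by
  simp only [Qreg, bellmanBackup]
  rw [hV s]
  ring

end RegularizedValue

theorem bounded_advantage_forward_kl_general
    {S A : Type*} [Fintype S] [Fintype A] [Nonempty A]
    (P : S → A → S → ℝ) (hP : ∀ s a, (∀ s', 0 ≤ P s a s') ∧ ∑ s' : S, P s a s' = 1)
    (r : S → A → ℝ) (rmax : ℝ) (hr : ∀ s a, 0 ≤ r s a ∧ r s a ≤ rmax)
    (γ : ℝ) (hγ0 : 0 ≤ γ) (hγ1 : γ < 1)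
    (πref : S → A → ℝ) (hπref : IsPolicy πref)
    (cref : ℝ) (hcref : cref = ⨅ q : S × A, πref q.1 q.2)
    (lam : ℝ) (hlam : 0 < lam)
    (u : S → ℝ) (hu : (∀ s, 0 ≤ u s) ∧ ∑ s : S, u s = 1)
    (cu : ℝ) (hcu0 : 0 < cu) (hcu : ∀ s, cu ≤ u s)
    (θ : EuclideanSpace ℝ (S × A))
    (V : S → ℝ)
    (hV : IsRegValue P r γ lam (fun x => -Real.log x) πref (softmaxPolicy θ) V)
    (V0 : ℝ) (hV0 : V0 ≤ ∑ s : S, u s * V s)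
    (CA : ℝ) (hCA : CA = (rmax / (1 - γ) - V0) / (lam * cu)) :
    (∀ (s : S) (a : A),
      Real.exp (-(CA + Real.log (Fintype.card A)) / cref) ≤ softmaxPolicy θ s a) ∧
    (∀ (s : S) (a : A),
      |Qreg P r γ lam (fun x => -Real.log x) πref (softmaxPolicy θ) V s a - V s| ≤
        (rmax + lam * CA) / (1 - γ)) := by
  set π := softmaxPolicy θ
  set D : S → ℝ := fun s => fDiv (fun x => -Real.log x) (π s) (πref s)
  have hπ : IsPolicy π := isPolicy_softmaxPolicy θ
  have hD0 : ∀ s, 0 ≤ D s := fun s =>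
    fDiv_neg_log_nonneg (hπ.1 s) (hπref.1 s) ((hπ.2 s).trans (hπref.2 s).symm)
  have hlamD0 : ∀ s, 0 ≤ lam * D s := fun s => mul_nonneg hlam.le (hD0 s)
  have hVD := hV.add_mul_fDiv_le hP hγ0 hγ1 hπ (fun s a => (hr s a).2) hlamD0
  have hDCA : ∀ s, D s ≤ CA :=
    hCA ▸ le_div_of_add_mul_le_of_le_sum_mul hu.2 hcu0 hcu hD0 hlam hVD hV0
  refine ⟨fun s a => ?_, fun s a => ?_⟩
  · have : Nonempty S := ⟨s⟩
    exact exp_le_of_fDiv_neg_log_le (hπ.1 s) (hπ.le_one s) (hπref.1 s) (hπref.2 s) (hDCA s)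
      (hcref ▸ hπref.ciInf_pos) (fun a => hcref ▸ ciInf_le (Finite.bddBelow_range _) (s, a)) a
  have hCA0 : 0 ≤ CA := (hD0 s).trans (hDCA s)
  have hVlo := hV.neg_div_le hP hγ0 hγ1 hπ (fun s a => (hr s a).1)
    (fun s => mul_le_mul_of_nonneg_left (hDCA s) hlam.le)
  have hVhi := hV.le_rmax_div hP hγ0 hγ1 hπ (fun s a => (hr s a).2) hlamD0
  rw [Qreg_sub_eq hV]
  refine (abs_sub_sum_mul_le (fun a => (hπ.1 s a).le) (hπ.2 s)
    (le_bellmanBackup hP hγ0 (fun s a => (hr s a).1) hVlo s)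
    (bellmanBackup_le hP hγ0 (fun s a => (hr s a).2) hVhi s) a).trans ?_
  have h1γ : 1 - γ ≠ 0 := by linarith
  have hwidth : rmax + γ * (rmax / (1 - γ)) - γ * (-(lam * CA) / (1 - γ))
      = (rmax + γ * (lam * CA)) / (1 - γ) := by
    field_simp
    ring
  rw [hwidth]
  refine div_le_div_of_nonneg_right ?_ (by linarith)
  linarith [mul_le_of_le_one_left (mul_nonneg hlam.le hCA0) hγ1.le]

/-- (Bounded advantage under forward KL) If
`Ṽ_λ^{π_θ}(u) ≥ Ṽ₀` and `C_A := (r_max/(1−γ) − Ṽ₀)/(λ c_u)`, then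
(i) `π_θ(a|s) ≥ exp(−(C_A + log|A|)/c_ref)` for all `s, a`; and
(ii) `max_{s,a}|Ã_λ^{π_θ}(s,a)| ≤ (r_max + λ C_A)/(1−γ)`. -/
theorem bounded_advantage_forward_kl
    {S A : Type*} [Fintype S] [Fintype A] [Nonempty S] [Nonempty A]
    (P : S → A → S → ℝ) (hP : ∀ s a, (∀ s', 0 ≤ P s a s') ∧ ∑ s' : S, P s a s' = 1)
    (r : S → A → ℝ) (rmax : ℝ) (hr : ∀ s a, 0 ≤ r s a ∧ r s a ≤ rmax)
    (γ : ℝ) (hγ0 : 0 ≤ γ) (hγ1 : γ < 1)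
    (πref : S → A → ℝ) (hπref : IsPolicy πref)
    (cref : ℝ) (hcref : cref = ⨅ q : S × A, πref q.1 q.2)
    (lam : ℝ) (hlam : 0 < lam)
    (u : S → ℝ) (hu : (∀ s, 0 ≤ u s) ∧ ∑ s : S, u s = 1)
    (cu : ℝ) (hcu0 : 0 < cu) (hcu : ∀ s, cu ≤ u s)
    (θ : EuclideanSpace ℝ (S × A))
    (V : S → ℝ)
    (hV : IsRegValue P r γ lam (fun x => -Real.log x) πref (softmaxPolicy θ) V)
    (V0 : ℝ) (hV0 : V0 ≤ ∑ s : S, u s * V s)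
    (CA : ℝ) (hCA : CA = (rmax / (1 - γ) - V0) / (lam * cu)) :
    (∀ (s : S) (a : A),
      Real.exp (-(CA + Real.log (Fintype.card A)) / cref) ≤ softmaxPolicy θ s a) ∧
    (∀ (s : S) (a : A),
      |Qreg P r γ lam (fun x => -Real.log x) πref (softmaxPolicy θ) V s a - V s| ≤
        (rmax + lam * CA) / (1 - γ)) :=
  bounded_advantage_forward_kl_general P hP r rmax hr γ hγ0 hγ1 πref hπref cref hcref lam hlam u hu
    cu hcu0 hcu θ V hV V0 hV0 CA hCA
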